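/- Let (X,d) be a metric space and A ⊆ X. Then A is a Bourbaki-bounded subset of X (every uniformly continuous real-valued function on X is bounded on A) if and only if for every γ > 0 there exist M₁, M₂ ∈ ℕ and points x₁, …, x_{M₁} ∈ X such that A ⊆ {x₁, …, x_{M₁}}^{M₂, γ}, where for S ⊆ X one defines S^{1,γ} = {x ∈ X : d(x,S) ≤ γ} and inductively S^{k,γ} = {x ∈ X : d(x, S^{k-1,γ}) ≤ γ}. -/

import Mathlib

/-!
If `A` is Bourbaki-bounded and `γ > 0`, then `A` meets only finitely many `γ`-chain
components, since otherwise the index of the component containing a point is a uniformly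
continuous function (it is constant on `γ`-close pairs) that is unbounded on `A`. So `A` lies in
the union of the enlargements `S^{n,γ}` of a finite set `S`. The first stage `n` with
`x ∈ S^{n,γ}` jumps between close points, but its interpolation `(m - 1) γ + d(x, S^{m-1,γ})`
changes by at most `2 d(x, y)` between `γ`-close points; being uniformly continuous, it is bounded
on `A`, and so are the stages.

Conversely, if `|f x - f y| < 1` whenever `d(x, y) < δ`, then `|f|` grows by at most `1` from
one `δ/2`-enlargement of a finite set to the next.
-/

/-- The iterated `γ`-enlargements of a set: `enlarge γ S 0 = S` and
`enlarge γ S (k+1) = {x : d(x, enlarge γ S k) ≤ γ}`, where the distance to a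
set is computed in `[0,∞]` (so it is `∞` for the empty set). -/
def enlarge {X : Type*} [MetricSpace X] (γ : ℝ) (S : Set X) : ℕ → Set X
  | 0 => S
  | k + 1 => {x : X | EMetric.infEdist x (enlarge γ S k) ≤ ENNReal.ofReal γ}

open Metric
open scoped ENNReal

theorem ENNReal.abs_toReal_sub_le {a b c : ℝ≥0∞} (hab : a ≤ b + c) (hba : b ≤ a + c)
    (hc : c ≠ ⊤) : |a.toReal - b.toReal| ≤ c.toReal := by
  have top_of_top : ∀ {a b : ℝ≥0∞}, a ≤ b + c → a = ⊤ → b = ⊤ := fun h ha => by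
    simpa [ha, hc] using h
  rw [abs_sub_le_iff]
  constructor <;> linarith [ENNReal.toReal_le_add' hab (top_of_top hba) (absurd · hc),
    ENNReal.toReal_le_add' hba (top_of_top hab) (absurd · hc)]

section Enlarge

variable {X : Type*} [MetricSpace X] {γ : ℝ} {S T : Set X} {n : ℕ} {x y : X}

theorem mem_enlarge_succ :
    x ∈ enlarge γ S (n + 1) ↔ infEDist x (enlarge γ S n) ≤ ENNReal.ofReal γ :=
  Iff.rfl

theorem mem_enlarge_succ_of_edist_le (hy : y ∈ enlarge γ S n)
    (hxy : edist x y ≤ ENNReal.ofReal γ) : x ∈ enlarge γ S (n + 1) :=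
  mem_enlarge_succ.2 ((infEDist_le_edist_of_mem hy).trans hxy)

theorem mem_enlarge_succ_of_dist_le (hy : y ∈ enlarge γ S n) (hxy : dist x y ≤ γ) :
    x ∈ enlarge γ S (n + 1) :=
  mem_enlarge_succ_of_edist_le hy (edist_dist x y ▸ ENNReal.ofReal_le_ofReal hxy)

theorem monotone_enlarge : Monotone (enlarge γ S) :=
  monotone_nat_of_le_succ fun _ _ hx => mem_enlarge_succ_of_edist_le hx (by simp)

theorem enlarge_subset_of_subset (h : S ⊆ T) : ∀ n, enlarge γ S n ⊆ enlarge γ T n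
  | 0 => h
  | n + 1 => fun _ hx => mem_enlarge_succ.2 <|
      (infEDist_anti (enlarge_subset_of_subset h n)).trans (mem_enlarge_succ.1 hx)

theorem abs_le_add_of_mem_enlarge {f : X → ℝ} {δ C : ℝ} (hδ : 0 < δ) (hγδ : γ < δ)
    (hf : ∀ ⦃x y : X⦄, dist x y < δ → dist (f x) (f y) < 1) (hS : ∀ x ∈ S, |f x| ≤ C) :
    ∀ n, ∀ x ∈ enlarge γ S n, |f x| ≤ C + n
  | 0 => fun x hx => by simpa using hS x hx
  | n + 1 => fun x hx => by
    obtain ⟨y, hy, hxy⟩ := infEDist_lt_iff.1 <|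
      (mem_enlarge_succ.1 hx).trans_lt ((ENNReal.ofReal_lt_ofReal_iff hδ).2 hγδ)
    have hfxy : |f x - f y| < 1 := hf (edist_lt_ofReal.1 hxy)
    have hfy := abs_le_add_of_mem_enlarge hδ hγδ hf hS n y hy
    push_cast
    linarith [abs_sub_abs_le_abs_sub (f x) (f y)]

end Enlarge

section ChainClosure

variable {X : Type*} [MetricSpace X] {γ : ℝ} {S T : Set X} {x y : X}

/-- The points joined to `S` by a `γ`-chain. -/
def chainClosure (γ : ℝ) (S : Set X) : Set X :=
  ⋃ n, enlarge γ S n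

theorem subset_chainClosure : S ⊆ chainClosure γ S :=
  Set.subset_iUnion (enlarge γ S) 0

theorem chainClosure_mono (h : S ⊆ T) : chainClosure γ S ⊆ chainClosure γ T :=
  Set.iUnion_mono (enlarge_subset_of_subset h)

theorem mem_chainClosure_of_dist_le (hy : y ∈ chainClosure γ S) (hxy : dist x y ≤ γ) :
    x ∈ chainClosure γ S := by
  obtain ⟨n, hn⟩ := Set.mem_iUnion.1 hy
  exact Set.mem_iUnion.2 ⟨n + 1, mem_enlarge_succ_of_dist_le hn hxy⟩

theorem mem_chainClosure_iff_of_dist_le (hxy : dist x y ≤ γ) :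
    x ∈ chainClosure γ S ↔ y ∈ chainClosure γ S :=
  ⟨fun hx => mem_chainClosure_of_dist_le hx (dist_comm x y ▸ hxy),
    fun hy => mem_chainClosure_of_dist_le hy hxy⟩

end ChainClosure

section EnlargeLevel

variable {X : Type*} [MetricSpace X] {γ : ℝ} {S : Set X} {n N : ℕ} {x y : X}

/-- At a point first reached at stage `m + 1` this is `m γ + d(x, S^{m,γ})`, an interpolation
of `γ` times the stage; it is `∞` off `chainClosure γ S`. -/
noncomputable def enlargeLevel (γ : ℝ) (S : Set X) (x : X) : ℝ≥0∞ :=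
  ⨅ (n : ℕ) (_ : x ∈ enlarge γ S (n + 1)), n * ENNReal.ofReal γ + infEDist x (enlarge γ S n)

theorem enlargeLevel_le (h : x ∈ enlarge γ S (n + 1)) :
    enlargeLevel γ S x ≤ n * ENNReal.ofReal γ + infEDist x (enlarge γ S n) :=
  iInf₂_le n h

theorem enlargeLevel_lt_top (hx : x ∈ chainClosure γ S) : enlargeLevel γ S x < ⊤ := by
  obtain ⟨n, hn⟩ := Set.mem_iUnion.1 hx
  calc enlargeLevel γ S x ≤ n * ENNReal.ofReal γ + infEDist x (enlarge γ S n) :=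
        enlargeLevel_le (monotone_enlarge n.le_succ hn)
    _ < ⊤ := by rw [infEDist_zero_of_mem hn, add_zero]; finiteness

theorem mem_enlarge_of_enlargeLevel_lt (h : enlargeLevel γ S x < N * ENNReal.ofReal γ) :
    x ∈ enlarge γ S N := by
  obtain ⟨n, hn, hlt⟩ : ∃ n, ∃ _ : x ∈ enlarge γ S (n + 1),
      n * ENNReal.ofReal γ + infEDist x (enlarge γ S n) < N * ENNReal.ofReal γ := by
    simpa only [enlargeLevel, iInf_lt_iff] using h
  have hnN : n < N := by
    by_contra! hNn
    exact (hlt.trans_le le_self_add).not_ge (by gcongr)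
  exact monotone_enlarge hnN hn

theorem enlargeLevel_le_add (hxy : dist x y ≤ γ) :
    enlargeLevel γ S x ≤ enlargeLevel γ S y + 2 * edist x y := by
  simp only [enlargeLevel, ENNReal.iInf_add]
  refine le_iInf₂ fun n hy => ?_
  have hD : infEDist x (enlarge γ S n) ≤ infEDist y (enlarge γ S n) + edist x y :=
    infEDist_le_infEDist_add_edist
  by_cases hx : x ∈ enlarge γ S (n + 1)
  · calc enlargeLevel γ S x ≤ n * ENNReal.ofReal γ + infEDist x (enlarge γ S n) :=
          enlargeLevel_le hx
      _ ≤ n * ENNReal.ofReal γ + (infEDist y (enlarge γ S n) + edist x y) := by gcongr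
      _ ≤ n * ENNReal.ofReal γ + infEDist y (enlarge γ S n) + 2 * edist x y := by
          rw [two_mul, ← add_assoc]; gcongr; exact le_add_right le_rfl
  -- `x` enters one stage after `y`, and is then already `γ - d(x, y)` away from `S^{n,γ}`.
  · have hγx : ENNReal.ofReal γ ≤ infEDist y (enlarge γ S n) + edist x y :=
      (not_le.1 hx).le.trans hD
    calc enlargeLevel γ S x
        ≤ (n + 1 : ℕ) * ENNReal.ofReal γ + infEDist x (enlarge γ S (n + 1)) :=
          enlargeLevel_le (mem_enlarge_succ_of_dist_le hy hxy)
      _ ≤ (n + 1 : ℕ) * ENNReal.ofReal γ + edist x y := by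
          gcongr; exact infEDist_le_edist_of_mem hy
      _ = n * ENNReal.ofReal γ + ENNReal.ofReal γ + edist x y := by push_cast; ring
      _ ≤ n * ENNReal.ofReal γ + (infEDist y (enlarge γ S n) + edist x y) + edist x y := by
          gcongr
      _ = n * ENNReal.ofReal γ + infEDist y (enlarge γ S n) + 2 * edist x y := by ring

theorem uniformContinuous_toReal_enlargeLevel (hγ : 0 < γ) :
    UniformContinuous fun x => (enlargeLevel γ S x).toReal := by
  refine Metric.uniformContinuous_iff.2 fun ε hε =>
    ⟨min γ (ε / 2), by positivity, fun {x y} hxy => ?_⟩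
  have hxyγ : dist x y ≤ γ := hxy.le.trans (min_le_left _ _)
  have hbound := ENNReal.abs_toReal_sub_le (enlargeLevel_le_add (S := S) hxyγ)
    (edist_comm x y ▸ enlargeLevel_le_add (S := S) (dist_comm x y ▸ hxyγ)) (by finiteness)
  rw [ENNReal.toReal_mul, edist_dist, ENNReal.toReal_ofReal dist_nonneg] at hbound
  rw [Real.dist_eq]
  have : dist x y < ε / 2 := hxy.trans_le (min_le_right _ _)
  norm_num at hbound
  linarith

end EnlargeLevel

section BourbakiBounded

variable {X : Type*} [MetricSpace X] {γ : ℝ} {A S : Set X}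

def IsBourbakiBounded (A : Set X) : Prop :=
  ∀ f : X → ℝ, UniformContinuous f → ∃ C : ℝ, ∀ x ∈ A, |f x| ≤ C

theorem IsBourbakiBounded.exists_finset_subset_chainClosure (hA : IsBourbakiBounded A)
    (hγ : 0 < γ) : ∃ s : Finset X, A ⊆ chainClosure γ s := by
  by_contra! h
  obtain ⟨u, huA, hu⟩ := exists_seq_of_forall_finset_exists (· ∈ A)
    (fun x y => y ∉ chainClosure γ {x}) fun s _ => by
      obtain ⟨y, hyA, hy⟩ := Set.not_subset.1 (h s)
      exact ⟨y, hyA, fun x hx hyx => hy (chainClosure_mono (by simpa using hx) hyx)⟩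
  let component (x : X) : ℕ := sInf {n | x ∈ chainClosure γ {u n}}
  have hcomponent : UniformContinuous fun x => (component x : ℝ) := by
    refine Metric.uniformContinuous_iff.2 fun ε hε => ⟨γ, hγ, fun {x y} hxy => ?_⟩
    have : component x = component y := by
      simp only [component, mem_chainClosure_iff_of_dist_le hxy.le]
    simpa [this] using hε
  have hcomponent_u (n : ℕ) : component (u n) = n :=
    le_antisymm (Nat.sInf_le (subset_chainClosure rfl))
      (le_csInf ⟨n, subset_chainClosure rfl⟩ fun m hm => not_lt.1 fun hmn => hu m n hmn hm)
  obtain ⟨C, hC⟩ := hA _ hcomponent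
  obtain ⟨n, hn⟩ := exists_nat_gt C
  have := hC (u n) (huA n)
  rw [hcomponent_u, Nat.abs_cast] at this
  linarith

theorem IsBourbakiBounded.exists_subset_enlarge (hA : IsBourbakiBounded A) (hγ : 0 < γ)
    (hAS : A ⊆ chainClosure γ S) : ∃ N, A ⊆ enlarge γ S N := by
  obtain ⟨C, hC⟩ := hA _ (uniformContinuous_toReal_enlargeLevel (S := S) hγ)
  obtain ⟨N, hN⟩ := exists_nat_gt (C / γ)
  refine ⟨N, fun x hx => mem_enlarge_of_enlargeLevel_lt ?_⟩
  have hCN : C < N * γ := (div_lt_iff₀ hγ).1 hN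
  rw [← ENNReal.ofReal_toReal (enlargeLevel_lt_top (hAS hx)).ne, ← ENNReal.ofReal_natCast,
    ← ENNReal.ofReal_mul (Nat.cast_nonneg _),
    ENNReal.ofReal_lt_ofReal_iff ((abs_nonneg _).trans (hC x hx) |>.trans_lt hCN)]
  exact (le_abs_self _).trans (hC x hx) |>.trans_lt hCN

end BourbakiBounded

/-- `A ⊆ X` is a Bourbaki-bounded subset of `X` (every uniformly continuous
real function on `X` is bounded on `A`) iff for every `γ > 0` there are
finitely many points `x₁, …, x_{M₁}` of `X` and `M₂ ∈ ℕ` with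
`A ⊆ {x₁, …, x_{M₁}}^{M₂, γ}`. -/
theorem bourbakiBoundedSubset_iff_finitely_chainable {X : Type*} [MetricSpace X] (A : Set X) :
    (∀ f : X → ℝ, UniformContinuous f → ∃ C : ℝ, ∀ x ∈ A, |f x| ≤ C) ↔
    (∀ γ : ℝ, 0 < γ → ∃ (M₁ M₂ : ℕ) (x : Fin M₁ → X),
      A ⊆ enlarge γ (Set.range x) M₂) := by
  change IsBourbakiBounded A ↔ _
  constructor
  · intro hA γ hγ
    obtain ⟨s, hs⟩ := hA.exists_finset_subset_chainClosure hγ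
    obtain ⟨N, hN⟩ := hA.exists_subset_enlarge hγ hs
    obtain ⟨M, x, -, hx⟩ := s.finite_toSet.fin_param
    exact ⟨M, N, x, hx ▸ hN⟩
  · intro h f hf
    obtain ⟨δ, hδ, hfδ⟩ := Metric.uniformContinuous_iff.1 hf 1 one_pos
    obtain ⟨M₁, M₂, x, hx⟩ := h (δ / 2) (half_pos hδ)
    obtain ⟨C, hC⟩ := ((Set.finite_range x).image fun y => |f y|).bddAbove
    exact ⟨C + M₂, fun a ha => abs_le_add_of_mem_enlarge hδ (half_lt_self hδ) hfδ
      (fun y hy => hC ⟨y, hy, rfl⟩) M₂ a (hx ha)⟩
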